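/- Suppose a₁, a₂, c₁, c₂, c₃, c₄ > 0. If (u₁, u₂, v₁, v₂, v₃, v₄) ∈ ℝ⁶ is a constant equilibrium satisfying u₁ ≥ v₁ and u₂ ≤ v₄, then u₁ = M₀ − (a₁c₂/D₃)(M₀+W₁), u₂ = (a₁c₂/D₃)(M₀+W₁), v₁ = (a₂c₂/D₃)(M₀+W₁), v₂ = (a₂(a₁+c₁)/D₃)(M₀+W₁), v₃ = (c₄/(c₃+c₄))N₀ − ((a₂c₄(a₁+c₁+c₂)−a₁a₂c₂)/(D₃(c₃+c₄)))(M₀+W₁), v₄ = (c₃/(c₃+c₄))N₀ − ((a₂c₃(a₁+c₁+c₂)+a₁a₂c₂)/(D₃(c₃+c₄)))(M₀+W₁). In particular, there is at most one constant equilibrium with u₁ ≥ v₁ and u₂ ≤ v₄. -/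

import Mathlib

/-!
On the region `v1 ≤ u1`, `u2 ≤ v4` both `min` terms resolve, so the equilibrium equations
become linear. The quantity `M0 + W1 = u2 + v1 + v2` is conserved, and the first two reaction
balances make `u2` and `v2` multiples of `v1`; this determines `u2, v1, v2`, hence `u1`, and then
`v3, v4` are fixed by the last balance together with `v3 + v4 = N0 - v1 - v2`. -/

/-- A constant equilibrium of the conservative reaction-diffusion system. -/
def IsConstantEquilibrium (a1 a2 c1 c2 c3 c4 M0 N0 W1 W2 u1 u2 v1 v2 v3 v4 : ℝ) : Prop :=
  (-a1 * min u1 v1 + a2 * min u2 v4 = 0) ∧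
  (a1 * min u1 v1 - a2 * min u2 v4 = 0) ∧
  (-a1 * min u1 v1 - c1 * v1 + c2 * v2 = 0) ∧
  (-c2 * v2 + c1 * v1 + a2 * min u2 v4 = 0) ∧
  (-c3 * v3 + c4 * v4 + a1 * min u1 v1 = 0) ∧
  (-a2 * min u2 v4 - c4 * v4 + c3 * v3 = 0) ∧
  (u1 + u2 = M0) ∧ (v1 + v2 + v3 + v4 = N0) ∧
  (v1 + v2 - u1 = W1) ∧ (v3 + v4 - u2 = W2)

theorem IsConstantEquilibrium.linear_of_le
    {a1 a2 c1 c2 c3 c4 M0 N0 W1 W2 u1 u2 v1 v2 v3 v4 : ℝ}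
    (heq : IsConstantEquilibrium a1 a2 c1 c2 c3 c4 M0 N0 W1 W2 u1 u2 v1 v2 v3 v4)
    (h1 : v1 ≤ u1) (h2 : u2 ≤ v4) :
    a1 * v1 = a2 * u2 ∧ c2 * v2 = (a1 + c1) * v1 ∧ c3 * v3 = c4 * v4 + a1 * v1 ∧
      u1 + u2 = M0 ∧ v1 + v2 + v3 + v4 = N0 ∧ u2 + v1 + v2 = M0 + W1 := by
  obtain ⟨e1, -, e3, -, e5, -, hM, hN, hW1, -⟩ := heq
  simp only [min_eq_right h1, min_eq_left h2] at e1 e3 e5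
  refine ⟨?_, ?_, ?_, hM, hN, ?_⟩ <;> linarith

theorem eq_div_mul_of_proportional_of_add_eq {a1 a2 c1 c2 u2 v1 v2 S : ℝ}
    (ha2 : a2 ≠ 0) (hc2 : c2 ≠ 0) (hD : a2 * (a1 + c1 + c2) + a1 * c2 ≠ 0)
    (hu2 : a1 * v1 = a2 * u2) (hv2 : c2 * v2 = (a1 + c1) * v1) (hS : u2 + v1 + v2 = S) :
    u2 = a1 * c2 / (a2 * (a1 + c1 + c2) + a1 * c2) * S ∧
      v1 = a2 * c2 / (a2 * (a1 + c1 + c2) + a1 * c2) * S ∧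
      v2 = a2 * (a1 + c1) / (a2 * (a1 + c1 + c2) + a1 * c2) * S := by
  have hv1 : (a2 * (a1 + c1 + c2) + a1 * c2) * v1 = a2 * c2 * S := by
    linear_combination c2 * hu2 - a2 * hv2 + a2 * c2 * hS
  have hu2' : (a2 * (a1 + c1 + c2) + a1 * c2) * u2 = a1 * c2 * S := by
    refine mul_left_cancel₀ ha2 ?_
    linear_combination -(a2 * (a1 + c1 + c2) + a1 * c2) * hu2 + a1 * hv1
  have hv2' : (a2 * (a1 + c1 + c2) + a1 * c2) * v2 = a2 * (a1 + c1) * S := by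
    refine mul_left_cancel₀ hc2 ?_
    linear_combination (a2 * (a1 + c1 + c2) + a1 * c2) * hv2 + (a1 + c1) * hv1
  simp only [div_mul_eq_mul_div, eq_div_iff hD]
  exact ⟨by linear_combination hu2', by linear_combination hv1, by linear_combination hv2'⟩

theorem eq_div_of_mul_eq_mul_add_of_add_eq {c3 c4 v3 v4 f T : ℝ} (hc : c3 + c4 ≠ 0)
    (hf : c3 * v3 = c4 * v4 + f) (hT : v3 + v4 = T) :
    v3 = (c4 * T + f) / (c3 + c4) ∧ v4 = (c3 * T - f) / (c3 + c4) := by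
  simp only [eq_div_iff hc]
  exact ⟨by linear_combination hf + c4 * hT, by linear_combination -hf + c3 * hT⟩

theorem equilibrium_Q3_unique (a1 a2 c1 c2 c3 c4 M0 N0 W1 W2 : ℝ)
    (ha1 : 0 < a1) (ha2 : 0 < a2) (hc1 : 0 < c1) (hc2 : 0 < c2)
    (hc3 : 0 < c3) (hc4 : 0 < c4)
    (D3 : ℝ)
    (hD3 : D3 = a2 * (a1 + c1 + c2) + a1 * c2)
    (u1 u2 v1 v2 v3 v4 : ℝ)
    (heq : IsConstantEquilibrium a1 a2 c1 c2 c3 c4 M0 N0 W1 W2 u1 u2 v1 v2 v3 v4)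
    (h1 : u1 ≥ v1) (h2 : u2 ≤ v4) :
    u1 = M0 - (a1 * c2 / D3) * (M0 + W1) ∧
    u2 = (a1 * c2 / D3) * (M0 + W1) ∧
    v1 = (a2 * c2 / D3) * (M0 + W1) ∧
    v2 = (a2 * (a1 + c1) / D3) * (M0 + W1) ∧
    v3 = (c4 / (c3 + c4)) * N0 - ((a2 * c4 * (a1 + c1 + c2) - a1 * a2 * c2) / (D3 * (c3 + c4))) * (M0 + W1) ∧
    v4 = (c3 / (c3 + c4)) * N0 - ((a2 * c3 * (a1 + c1 + c2) + a1 * a2 * c2) / (D3 * (c3 + c4))) * (M0 + W1) := by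
  subst hD3
  obtain ⟨hu2, hv2, hv3, hM, hN, hS⟩ := heq.linear_of_le h1 h2
  have hD : a2 * (a1 + c1 + c2) + a1 * c2 ≠ 0 := by positivity
  obtain ⟨hu2', hv1', hv2'⟩ := eq_div_mul_of_proportional_of_add_eq ha2.ne' hc2.ne' hD hu2 hv2 hS
  obtain ⟨hv3', hv4'⟩ := eq_div_of_mul_eq_mul_add_of_add_eq (by positivity) hv3
    (show v3 + v4 = N0 - v1 - v2 by linarith)
  refine ⟨by linarith, hu2', hv1', hv2', ?_, ?_⟩
  · rw [hv3', hv1', hv2']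
    field_simp
    ring
  · rw [hv4', hv1', hv2']
    field_simp
    ring
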